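/- Any two M-projections on a Banach space commute. -/
import Mathlib

def IsMProj {X : Type*} [NormedAddCommGroup X] [NormedSpace ℝ X]
    (π : X →L[ℝ] X) : Prop :=
  π.comp π = π ∧ ∀ x, ‖x‖ = max ‖π x‖ ‖x - π x‖

section aux

variable {X : Type*} [NormedAddCommGroup X] [NormedSpace ℝ X]

/-- A nearly norming element for a real functional. -/
lemma mproj_exists_near_norm (g : X →L[ℝ] ℝ) {ε : ℝ} (hε : 0 < ε) :
    ∃ x : X, ‖x‖ ≤ 1 ∧ ‖g‖ - ε ≤ g x := by
  obtain ⟨x, hx1, hx2⟩ := g.exists_lt_apply_of_lt_opNorm (r := ‖g‖ - ε) (by linarith)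
  rcases le_or_gt 0 (g x) with h | h
  · rw [Real.norm_eq_abs, abs_of_nonneg h] at hx2
    exact ⟨x, hx1.le, hx2.le⟩
  · refine ⟨-x, by simpa using hx1.le, ?_⟩
    rw [Real.norm_eq_abs, abs_of_neg h] at hx2
    rw [map_neg]
    linarith

/-- The dual action of an M-projection is an L-projection: norms add. -/
lemma mproj_dual_L (π : X →L[ℝ] X) (hπ : IsMProj π) (f : X →L[ℝ] ℝ) :
    ‖f‖ = ‖f.comp π‖ + ‖f - f.comp π‖ := by
  obtain ⟨hi, hn⟩ := hπ
  have hidem : ∀ y : X, π (π y) = π y := by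
    intro y
    have := ContinuousLinearMap.ext_iff.mp hi y
    simpa using this
  apply le_antisymm
  · calc ‖f‖ = ‖f.comp π + (f - f.comp π)‖ := by rw [add_sub_cancel]
    _ ≤ ‖f.comp π‖ + ‖f - f.comp π‖ := norm_add_le _ _
  · apply le_of_forall_pos_le_add
    intro ε hε
    obtain ⟨x, hx1, hx2⟩ := mproj_exists_near_norm (f.comp π) (half_pos hε)
    obtain ⟨y, hy1, hy2⟩ := mproj_exists_near_norm (f - f.comp π) (half_pos hε)
    set z : X := π x + (y - π y) with hz
    have hπz : π z = π x := by
      simp [hz, map_add, map_sub, hidem]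
    have hzπ : z - π z = y - π y := by
      rw [hπz, hz]; abel
    have hπx : ‖π x‖ ≤ 1 := by
      have := hn x
      have h1 : ‖π x‖ ≤ ‖x‖ := by rw [this]; exact le_max_left _ _
      linarith
    have hyπ : ‖y - π y‖ ≤ 1 := by
      have := hn y
      have h1 : ‖y - π y‖ ≤ ‖y‖ := by rw [this]; exact le_max_right _ _
      linarith
    have hznorm : ‖z‖ ≤ 1 := by
      rw [hn z, hzπ, hπz]
      exact max_le hπx hyπ
    have hfz : f z = (f.comp π) x + (f - f.comp π) y := by
      simp [hz, map_add, map_sub]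
    have hfz_le : f z ≤ ‖f‖ := by
      calc f z ≤ |f z| := le_abs_self _
      _ = ‖f z‖ := rfl
      _ ≤ ‖f‖ * ‖z‖ := f.le_opNorm z
      _ ≤ ‖f‖ * 1 := by
          apply mul_le_mul_of_nonneg_left hznorm (norm_nonneg f)
      _ = ‖f‖ := mul_one _
    rw [hfz] at hfz_le
    linarith

/-- Key step: for M-projections, π ∘ ρ = π ∘ ρ ∘ π. -/
lemma mproj_key (π ρ : X →L[ℝ] X) (hπ : IsMProj π) (hρ : IsMProj ρ) :
    π.comp ρ = (π.comp ρ).comp π := by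
  have hi := hπ.1
  ext x
  rw [NormedSpace.eq_iff_forall_dual_eq ℝ]
  intro f
  set g : X →L[ℝ] ℝ := f.comp π with hgdef
  have hg : g.comp π = g := by
    rw [hgdef, ContinuousLinearMap.comp_assoc, hi]
  set a : X →L[ℝ] ℝ := (g.comp ρ).comp π with ha
  set b : X →L[ℝ] ℝ := g.comp ρ - a with hb
  set c : X →L[ℝ] ℝ := (g - g.comp ρ).comp π with hc
  have hc' : c = g - a := by
    rw [hc, ContinuousLinearMap.sub_comp, hg, ha]
  have e1 : ‖g‖ = ‖g.comp ρ‖ + ‖g - g.comp ρ‖ := mproj_dual_L ρ hρ g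
  have e2 : ‖g.comp ρ‖ = ‖a‖ + ‖b‖ := mproj_dual_L π hπ (g.comp ρ)
  have e3 : ‖g - g.comp ρ‖ = ‖c‖ + ‖b‖ := by
    have := mproj_dual_L π hπ (g - g.comp ρ)
    rw [← hc] at this
    have hrw : (g - g.comp ρ) - c = -b := by
      rw [hc', hb]; abel
    rw [hrw, norm_neg] at this
    exact this
  have e4 : ‖g‖ ≤ ‖a‖ + ‖c‖ := by
    have : g = a + c := by rw [hc']; abel
    calc ‖g‖ = ‖a + c‖ := by rw [← this]
    _ ≤ ‖a‖ + ‖c‖ := norm_add_le _ _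
  have hb0 : ‖b‖ ≤ 0 := by linarith
  have hbz : b = 0 := by
    have := norm_nonneg b
    exact norm_eq_zero.mp (le_antisymm hb0 this)
  have hcomm : g.comp ρ = (g.comp ρ).comp π := by
    have h := sub_eq_zero.mp hbz
    rw [ha] at h
    exact h
  -- evaluate at x
  have := ContinuousLinearMap.ext_iff.mp hcomm x
  simpa [hgdef] using this

lemma isMProj_one_sub (π : X →L[ℝ] X) (hπ : IsMProj π) : IsMProj (1 - π) := by
  obtain ⟨hi, hn⟩ := hπ
  constructor
  · have : (1 - π).comp (1 - π) = 1 - π - (π - π.comp π) := by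
      simp only [ContinuousLinearMap.comp_sub, ContinuousLinearMap.sub_comp,
        ContinuousLinearMap.one_def, ContinuousLinearMap.comp_id,
        ContinuousLinearMap.id_comp]
    rw [this, hi]
    abel
  · intro x
    have h1 : (1 - π) x = x - π x := by
      simp [ContinuousLinearMap.sub_apply]
    rw [h1]
    have h2 : x - (x - π x) = π x := by abel
    rw [h2, max_comm]
    exact hn x

end aux

/-- Any two M-projections on a Banach space commute. -/
theorem mproj_commute {X : Type*} [NormedAddCommGroup X] [NormedSpace ℝ X]
    [CompleteSpace X] (π ρ : X →L[ℝ] X) (hπ : IsMProj π) (hρ : IsMProj ρ) :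
    π.comp ρ = ρ.comp π := by
  have h1 : π.comp ρ = (π.comp ρ).comp π := mproj_key π ρ hπ hρ
  have h2 : (1 - π).comp ρ = ((1 - π).comp ρ).comp (1 - π) :=
    mproj_key (1 - π) ρ (isMProj_one_sub π hπ) hρ
  simp only [ContinuousLinearMap.comp_sub, ContinuousLinearMap.sub_comp,
    ContinuousLinearMap.one_def, ContinuousLinearMap.comp_id,
    ContinuousLinearMap.id_comp] at h2
  rw [← h1] at h2
  -- h2 : ρ - π.comp ρ = ρ - ρ.comp π - (π.comp ρ - π.comp ρ)
  have : ρ - π.comp ρ = ρ - ρ.comp π := by rw [h2]; abel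
  have := sub_right_inj.mp this
  rw [this]
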